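/- Let 0 < θ ≤ 5/6. Then the only strictly positive continuous function φ on [0,1] satisfying φ(t) = ∫₀¹ (1 + θ(4(t−1/2)(u−1/2))^{1/3}) φ(u)² du for all t is φ ≡ 1. -/
import Mathlib
open MeasureTheory Set

noncomputable def cbrt (x : ℝ) : ℝ := Real.sign x * |x| ^ ((1:ℝ)/3)

lemma real_sign_mul (a b : ℝ) : Real.sign (a*b) = Real.sign a * Real.sign b := by
  rcases lt_trichotomy a 0 with ha|rfl|ha <;> rcases lt_trichotomy b 0 with hb|rfl|hb <;>
    try simp [Real.sign_zero]
  · rw [Real.sign_of_pos (mul_pos_of_neg_of_neg ha hb), Real.sign_of_neg ha,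
      Real.sign_of_neg hb]; ring
  · rw [Real.sign_of_neg (mul_neg_of_neg_of_pos ha hb), Real.sign_of_neg ha,
      Real.sign_of_pos hb]; ring
  · rw [Real.sign_of_neg (mul_neg_of_pos_of_neg ha hb), Real.sign_of_pos ha,
      Real.sign_of_neg hb]; ring
  · rw [Real.sign_of_pos (mul_pos ha hb), Real.sign_of_pos ha, Real.sign_of_pos hb]; ring

lemma cbrt_mul (a b : ℝ) : cbrt (a*b) = cbrt a * cbrt b := by
  unfold cbrt
  rw [real_sign_mul, abs_mul, Real.mul_rpow (abs_nonneg a) (abs_nonneg b)]; ring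

lemma cbrt_cube (x : ℝ) : cbrt x ^ 3 = x := by
  unfold cbrt
  rw [mul_pow, ← Real.rpow_natCast (|x| ^ ((1:ℝ)/3)) 3, ← Real.rpow_mul (abs_nonneg x)]
  norm_num
  rcases lt_trichotomy x 0 with h|rfl|h
  · rw [Real.sign_of_neg h, abs_of_neg h]; ring
  · simp
  · rw [Real.sign_of_pos h, abs_of_pos h]; ring

lemma cbrt_sq (x : ℝ) : cbrt x ^ 2 = |x| ^ ((2:ℝ)/3) := by
  unfold cbrt
  rw [mul_pow, ← Real.rpow_natCast (|x| ^ ((1:ℝ)/3)) 2, ← Real.rpow_mul (abs_nonneg x)]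
  rcases lt_trichotomy x 0 with h|rfl|h
  · rw [Real.sign_of_neg h]; norm_num
  · rw [Real.sign_zero]; norm_num [Real.zero_rpow]
  · rw [Real.sign_of_pos h]; norm_num

lemma cbrt_neg (x : ℝ) : cbrt (-x) = - cbrt x := by
  unfold cbrt; rw [Real.sign_neg, abs_neg]; ring

lemma cbrt_four_pos : 0 < cbrt 4 := by
  unfold cbrt
  rw [Real.sign_of_pos (by norm_num : (0:ℝ) < 4)]
  simpa using Real.rpow_pos_of_pos (by norm_num : (0:ℝ) < |4|) _

lemma continuous_cbrt : Continuous cbrt := by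
  have h : cbrt = fun x : ℝ => if (fun _ : ℝ => (0:ℝ)) x ≤ id x
      then |x| ^ ((1:ℝ)/3) else -(|x| ^ ((1:ℝ)/3)) := by
    funext x
    rcases lt_trichotomy x 0 with h|rfl|h
    · rw [if_neg (by simpa using h.not_ge)]; unfold cbrt; rw [Real.sign_of_neg h]; ring
    · simp [cbrt]
    · rw [if_pos (by simpa using h.le)]; unfold cbrt; rw [Real.sign_of_pos h]; ring
  rw [h]
  have habs : Continuous fun x : ℝ => |x| ^ ((1:ℝ)/3) :=
    continuous_abs.rpow_const (fun x => Or.inr (by norm_num))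
  exact habs.if_le habs.neg continuous_const continuous_id
    (fun x hx => by simp [show x = 0 from (by simpa using hx.symm)])
open MeasureTheory Set intervalIntegral

lemma cbrt_intble (a b : ℝ) : IntervalIntegrable cbrt volume a b :=
  continuous_cbrt.intervalIntegrable a b

lemma odd_cbrt_int : ∫ u in (0:ℝ)..1, cbrt (u - 1/2) = 0 := by
  have h3 := integral_comp_neg (a := 0) (b := 1/2) cbrt
  simp only [cbrt_neg, intervalIntegral.integral_neg, neg_zero] at h3
  have h2 := integral_add_adjacent_intervals (cbrt_intble (-(1/2)) 0) (cbrt_intble 0 (1/2))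
  rw [integral_comp_sub_right (a := 0) (b := 1) cbrt (1/2),
    show (0:ℝ)-1/2 = -(1/2) by norm_num, show (1:ℝ)-1/2 = 1/2 by norm_num]
  linarith

lemma cube_cbrt_int : ∫ u in (0:ℝ)..1, cbrt (u - 1/2) ^ 3 = 0 := by
  have h : ∀ u : ℝ, cbrt (u - 1/2) ^ 3 = u - 1/2 := fun u => cbrt_cube _
  rw [intervalIntegral.integral_congr (fun u _ => h u)]
  have := intervalIntegral.integral_sub (intervalIntegrable_id (a := 0) (b := 1) (μ := volume))
    (_root_.intervalIntegrable_const (c := (1/2:ℝ)))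
  rw [this]
  simp

lemma sq_cbrt_int : ∫ u in (0:ℝ)..1, cbrt (u - 1/2) ^ 2 = 6/5 * (1/2:ℝ) ^ ((5:ℝ)/3) := by
  have h : ∀ u : ℝ, cbrt (u - 1/2) ^ 2 = |u - 1/2| ^ ((2:ℝ)/3) := fun u => cbrt_sq _
  rw [intervalIntegral.integral_congr (fun u _ => h u)]
  rw [integral_comp_sub_right (a := 0) (b := 1) (fun v => |v| ^ ((2:ℝ)/3)) (1/2),
    show (0:ℝ)-1/2 = -(1/2) by norm_num, show (1:ℝ)-1/2 = 1/2 by norm_num]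
  have hi : ∀ a b : ℝ, IntervalIntegrable (fun v => |v| ^ ((2:ℝ)/3)) volume a b :=
    fun a b => (continuous_abs.rpow_const (fun x => Or.inr (by norm_num))).intervalIntegrable a b
  have h2 := integral_add_adjacent_intervals (hi (-(1/2)) 0) (hi 0 (1/2))
  have h3 := integral_comp_neg (a := 0) (b := 1/2) (fun v => |v| ^ ((2:ℝ)/3))
  simp only [abs_neg, neg_zero] at h3
  have h4 : ∫ v in (0:ℝ)..(1/2), |v| ^ ((2:ℝ)/3) = ∫ v in (0:ℝ)..(1/2), v ^ ((2:ℝ)/3) := by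
    apply intervalIntegral.integral_congr
    intro v hv
    rw [uIcc_of_le (by norm_num : (0:ℝ) ≤ 1/2)] at hv
    show |v| ^ ((2:ℝ)/3) = v ^ ((2:ℝ)/3)
    rw [abs_of_nonneg hv.1]
  have h5 : ∫ v in (0:ℝ)..(1/2), v ^ ((2:ℝ)/3) = ((1/2:ℝ) ^ ((5:ℝ)/3) - 0 ^ ((5:ℝ)/3)) / ((5:ℝ)/3) := by
    have := integral_rpow (a := 0) (b := 1/2) (r := (2:ℝ)/3) (Or.inl (by norm_num))
    rw [this]; norm_num
  rw [Real.zero_rpow (by norm_num : ((5:ℝ)/3) ≠ 0)] at h5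
  rw [← h2, ← h3, h4, h5]
  ring
lemma cbrt4_mul_I2 : cbrt 4 * (6/5 * (1/2:ℝ) ^ ((5:ℝ)/3)) = 3/5 := by
  have h4 : cbrt 4 = (2:ℝ) ^ ((2:ℝ)/3) := by
    unfold cbrt
    rw [Real.sign_of_pos (by norm_num : (0:ℝ) < 4),
      abs_of_pos (by norm_num : (0:ℝ) < 4), one_mul,
      show (4:ℝ) = (2:ℝ) ^ (2:ℝ) by
        rw [show (2:ℝ) = ((2:ℕ):ℝ) by norm_num, Real.rpow_natCast]; norm_num,
      ← Real.rpow_mul (by norm_num : (0:ℝ) ≤ 2)]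
    norm_num
  have h12 : (1/2:ℝ) ^ ((5:ℝ)/3) = (2:ℝ) ^ (-(5:ℝ)/3) := by
    rw [show (1/2:ℝ) = (2:ℝ) ^ (-1:ℝ) by rw [Real.rpow_neg_one]; norm_num,
      ← Real.rpow_mul (by norm_num : (0:ℝ) ≤ 2)]
    norm_num
  have hcomb : (2:ℝ) ^ ((2:ℝ)/3) * (2:ℝ) ^ (-(5:ℝ)/3) = (2:ℝ) ^ (-1:ℝ) := by
    rw [← Real.rpow_add (by norm_num : (0:ℝ) < 2)]; norm_num
  calc cbrt 4 * (6/5 * (1/2:ℝ) ^ ((5:ℝ)/3))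
      = 6/5 * ((2:ℝ) ^ ((2:ℝ)/3) * (2:ℝ) ^ (-(5:ℝ)/3)) := by rw [h4, h12]; ring
    _ = 6/5 * (2:ℝ) ^ (-1:ℝ) := by rw [hcomb]
    _ = 3/5 := by rw [Real.rpow_neg_one]; norm_num

lemma I2_pos : 0 < 6/5 * (1/2:ℝ) ^ ((5:ℝ)/3) := by
  have := Real.rpow_pos_of_pos (by norm_num : (0:ℝ) < 1/2) ((5:ℝ)/3)
  linarith

theorem stmt14 (θ : ℝ) (hθ0 : 0 < θ) (hθ1 : θ ≤ 5/6)
    (φ : ℝ → ℝ) (hφ : ContinuousOn φ (Icc 0 1)) (hpos : ∀ t ∈ Icc (0:ℝ) 1, 0 < φ t)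
    (hfix : ∀ t ∈ Icc (0:ℝ) 1,
      φ t = ∫ u in (0:ℝ)..1, (1 + θ * cbrt (4*(t - 1/2)*(u - 1/2))) * φ u ^ 2) :
    ∀ t ∈ Icc (0:ℝ) 1, φ t = 1 := by
  have I01 : uIcc (0:ℝ) 1 = Icc 0 1 := uIcc_of_le (by norm_num)
  have hφu : ContinuousOn φ (uIcc 0 1) := by rw [I01]; exact hφ
  have hcont2 : ContinuousOn (fun u => φ u ^ 2) (uIcc (0:ℝ) 1) := hφu.pow 2
  have hf2 : IntervalIntegrable (fun u => φ u ^ 2) volume 0 1 := hcont2.intervalIntegrable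
  have he : Continuous (fun u : ℝ => cbrt (u - 1/2)) := continuous_cbrt.comp (by continuity)
  have hfey : IntervalIntegrable (fun u => cbrt (u - 1/2) * φ u ^ 2) volume 0 1 :=
    (he.continuousOn.mul hcont2).intervalIntegrable
  have hie : IntervalIntegrable (fun u : ℝ => cbrt (u - 1/2)) volume 0 1 :=
    he.intervalIntegrable 0 1
  have hie2 : IntervalIntegrable (fun u : ℝ => cbrt (u - 1/2) ^ 2) volume 0 1 :=
    (he.pow 2).intervalIntegrable 0 1
  have hie3 : IntervalIntegrable (fun u : ℝ => cbrt (u - 1/2) ^ 3) volume 0 1 :=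
    (he.pow 3).intervalIntegrable 0 1
  set X := ∫ u in (0:ℝ)..1, φ u ^ 2 with hXdef
  set Y := ∫ u in (0:ℝ)..1, cbrt (u - 1/2) * φ u ^ 2 with hYdef
  set b := θ * cbrt 4 * Y with hbdef
  have hrep : ∀ t ∈ Icc (0:ℝ) 1, φ t = X + b * cbrt (t - 1/2) := by
    intro t ht
    rw [hfix t ht]
    have key : ∀ u : ℝ, (1 + θ * cbrt (4*(t - 1/2)*(u - 1/2))) * φ u ^ 2
        = φ u ^ 2 + (θ * cbrt 4 * cbrt (t - 1/2)) * (cbrt (u - 1/2) * φ u ^ 2) := by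
      intro u; rw [cbrt_mul, cbrt_mul]; ring
    rw [intervalIntegral.integral_congr (fun u _ => key u),
      intervalIntegral.integral_add hf2 (hfey.const_mul _),
      intervalIntegral.integral_const_mul]
    rw [hbdef]; ring
  have hXeq : X = X^2 + b^2 * (6/5 * (1/2:ℝ) ^ ((5:ℝ)/3)) := by
    have congr1 : EqOn (fun u => φ u ^ 2)
        (fun u => X^2 + (2*X*b) * cbrt (u - 1/2) + b^2 * cbrt (u - 1/2)^2) (uIcc (0:ℝ) 1) := by
      intro u hu; rw [I01] at hu
      show φ u ^ 2 = X^2 + (2*X*b) * cbrt (u - 1/2) + b^2 * cbrt (u - 1/2)^2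
      rw [hrep u hu]; ring
    conv_lhs => rw [hXdef]
    rw [intervalIntegral.integral_congr congr1,
      intervalIntegral.integral_add
        (intervalIntegrable_const.add (hie.const_mul (2*X*b))) (hie2.const_mul (b^2)),
      intervalIntegral.integral_add intervalIntegrable_const (hie.const_mul (2*X*b)),
      intervalIntegral.integral_const_mul, intervalIntegral.integral_const_mul,
      intervalIntegral.integral_const, odd_cbrt_int, sq_cbrt_int]
    simp
  have hYeq : Y = 2*X*b * (6/5 * (1/2:ℝ) ^ ((5:ℝ)/3)) := by
    have congr2 : EqOn (fun u => cbrt (u - 1/2) * φ u ^ 2)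
        (fun u => X^2 * cbrt (u - 1/2) + (2*X*b) * cbrt (u - 1/2)^2 + b^2 * cbrt (u - 1/2)^3)
        (uIcc (0:ℝ) 1) := by
      intro u hu; rw [I01] at hu
      show cbrt (u - 1/2) * φ u ^ 2
          = X^2 * cbrt (u - 1/2) + (2*X*b) * cbrt (u - 1/2)^2 + b^2 * cbrt (u - 1/2)^3
      rw [hrep u hu]; ring
    conv_lhs => rw [hYdef]
    rw [intervalIntegral.integral_congr congr2,
      intervalIntegral.integral_add
        ((hie.const_mul (X^2)).add (hie2.const_mul (2*X*b))) (hie3.const_mul (b^2)),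
      intervalIntegral.integral_add (hie.const_mul (X^2)) (hie2.const_mul (2*X*b)),
      intervalIntegral.integral_const_mul, intervalIntegral.integral_const_mul,
      intervalIntegral.integral_const_mul, odd_cbrt_int, sq_cbrt_int, cube_cbrt_int]
    ring
  have hXpos : 0 < X :=
    intervalIntegral_pos_of_pos_on hf2
      (fun x hx => pow_pos (hpos x ⟨hx.1.le, hx.2.le⟩) 2) one_pos
  by_cases hY : Y = 0
  · have hb0 : b = 0 := by rw [hbdef, hY]; ring
    have hX1 : X = 1 := by
      rw [hb0] at hXeq; nlinarith
    intro t ht; rw [hrep t ht, hb0, hX1]; ring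
  · exfalso
    have h2 : Y * (2*X*θ*(cbrt 4 * (6/5 * (1/2:ℝ) ^ ((5:ℝ)/3)))) = Y * 1 := by
      rw [mul_one]; conv_rhs => rw [hYeq, hbdef]
      ring
    have h1 : 2*X*θ*(cbrt 4 * (6/5 * (1/2:ℝ) ^ ((5:ℝ)/3))) = 1 := mul_left_cancel₀ hY h2
    rw [cbrt4_mul_I2] at h1
    have hX1 : 1 ≤ X := by nlinarith
    have hbne : b ≠ 0 := by
      rw [hbdef]; exact mul_ne_zero (mul_ne_zero hθ0.ne' cbrt_four_pos.ne') hY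
    have hbsq : 0 < b^2 := lt_of_le_of_ne (sq_nonneg b) (Ne.symm (pow_ne_zero 2 hbne))
    have hb2 : 0 < b^2 * (6/5 * (1/2:ℝ) ^ ((5:ℝ)/3)) := mul_pos hbsq I2_pos
    nlinarith [sq_nonneg (X - 1)]
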